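/- arXiv:2009.01454 — 4 statements merged into one kernel-verified Lean document; each statement's English description precedes it below -/
import Mathlib

section
/- Let H be a finite type and let p₁, p₀ : H → ℝ satisfy p₁ h > 0 and p₀ h > 0 for all h, with Σ_h p₁ h = 1 and Σ_h p₀ h = 1. Then for every function D : H → ℝ with 0 < D h < 1 for all h, Σ_h (p₁ h · log (D h) + p₀ h · log (1 − D h)) ≤ Σ_h (p₁ h · log (p₁ h / (p₁ h + p₀ h)) + p₀ h · log (p₀ h / (p₁ h + p₀ h))). That is, the adversarial objective is maximized over discriminators by the optimal discriminator D*(h) = p₁ h / (p₁ h + p₀ h). -/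
lemma pointwise_opt (a b d : ℝ) (ha : 0 < a) (hb : 0 < b) (hd0 : 0 < d) (hd1 : d < 1) :
    a * Real.log d + b * Real.log (1 - d)
      ≤ a * Real.log (a / (a + b)) + b * Real.log (b / (a + b)) := by
  have hab : 0 < a + b := by linarith
  have h1 : Real.log d - Real.log (a / (a + b)) ≤ d * (a + b) / a - 1 := by
    have := Real.log_le_sub_one_of_pos (show 0 < d / (a / (a + b)) by positivity)
    rwa [Real.log_div hd0.ne' (by positivity), div_div_eq_mul_div] at this
  have h2 : Real.log (1 - d) - Real.log (b / (a + b)) ≤ (1 - d) * (a + b) / b - 1 := by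
    have := Real.log_le_sub_one_of_pos (show 0 < (1 - d) / (b / (a + b)) by
      have : 0 < 1 - d := by linarith
      positivity)
    rwa [Real.log_div (by linarith) (by positivity), div_div_eq_mul_div] at this
  have ha' := mul_le_mul_of_nonneg_left h1 ha.le
  have hb' := mul_le_mul_of_nonneg_left h2 hb.le
  have e1 : a * (d * (a + b) / a - 1) = d * (a + b) - a := by field_simp
  have e2 : b * ((1 - d) * (a + b) / b - 1) = (1 - d) * (a + b) - b := by field_simp
  nlinarith [ha', hb']

/-- The adversarial objective `V(D) = Σ_h (p₁ h · log (D h) + p₀ h · log (1 - D h))` over a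
finite type is maximized by the optimal discriminator `D*(h) = p₁ h / (p₁ h + p₀ h)`. -/
theorem optimal_discriminator {H : Type*} [Fintype H] (p₁ p₀ : H → ℝ)
    (hp₁ : ∀ h, 0 < p₁ h) (hp₀ : ∀ h, 0 < p₀ h)
    (hs₁ : ∑ h, p₁ h = 1) (hs₀ : ∑ h, p₀ h = 1)
    (D : H → ℝ) (hD0 : ∀ h, 0 < D h) (hD1 : ∀ h, D h < 1) :
    ∑ h, (p₁ h * Real.log (D h) + p₀ h * Real.log (1 - D h))
      ≤ ∑ h, (p₁ h * Real.log (p₁ h / (p₁ h + p₀ h))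
            + p₀ h * Real.log (p₀ h / (p₁ h + p₀ h))) := by
  exact Finset.sum_le_sum fun h _ => pointwise_opt _ _ _ (hp₁ h) (hp₀ h) (hD0 h) (hD1 h)
end

section
/- Let H be a finite type and let p₁, p₀ : H → ℝ satisfy p₁ h > 0 and p₀ h > 0 for all h, with Σ_h p₁ h = 1 and Σ_h p₀ h = 1. Then Σ_h (p₁ h · log (p₁ h / (p₁ h + p₀ h)) + p₀ h · log (p₀ h / (p₁ h + p₀ h))) ≥ −log 4, and equality holds if and only if p₁ = p₀. -/
open Finset

lemma gibbs_aux {H : Type*} [Fintype H] (p q : H → ℝ)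
    (hp : ∀ h, 0 < p h) (hq : ∀ h, 0 < q h)
    (hs : ∑ h, q h = ∑ h, p h) :
    ∑ h, p h * Real.log (q h / p h) ≤ 0 ∧
    (∑ h, p h * Real.log (q h / p h) = 0 ↔ p = q) := by
  have key : ∀ h, p h * Real.log (q h / p h) ≤ q h - p h := by
    intro h
    have hx : 0 < q h / p h := div_pos (hq h) (hp h)
    have h1 := Real.log_le_sub_one_of_pos hx
    have h2 : p h * Real.log (q h / p h) ≤ p h * (q h / p h - 1) :=
      mul_le_mul_of_nonneg_left h1 (hp h).le
    have h3 : p h * (q h / p h - 1) = q h - p h := by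
      rw [mul_sub, mul_one, mul_comm, div_mul_cancel₀ _ (hp h).ne']
    linarith
  have hsum0 : ∑ h, (q h - p h) = 0 := by
    rw [Finset.sum_sub_distrib, hs, sub_self]
  have hle : ∑ h, p h * Real.log (q h / p h) ≤ 0 := by
    calc ∑ h, p h * Real.log (q h / p h) ≤ ∑ h, (q h - p h) :=
          Finset.sum_le_sum (fun h _ => key h)
      _ = 0 := hsum0
  refine ⟨hle, ?_, ?_⟩
  · intro heq
    by_contra hne
    obtain ⟨h₀, hh₀⟩ := Function.ne_iff.mp hne
    have hstrict : p h₀ * Real.log (q h₀ / p h₀) < q h₀ - p h₀ := by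
      have hx : 0 < q h₀ / p h₀ := div_pos (hq h₀) (hp h₀)
      have hx1 : q h₀ / p h₀ ≠ 1 := by
        intro h1
        rw [div_eq_one_iff_eq (hp h₀).ne'] at h1
        exact hh₀ h1.symm
      have h1 := Real.log_lt_sub_one_of_pos hx hx1
      have h2 : p h₀ * Real.log (q h₀ / p h₀) < p h₀ * (q h₀ / p h₀ - 1) :=
        (mul_lt_mul_iff_right₀ (hp h₀)).mpr h1
      have h3 : p h₀ * (q h₀ / p h₀ - 1) = q h₀ - p h₀ := by
        rw [mul_sub, mul_one, mul_comm, div_mul_cancel₀ _ (hp h₀).ne']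
      linarith
    have hlt : ∑ h, p h * Real.log (q h / p h) < ∑ h, (q h - p h) :=
      Finset.sum_lt_sum (fun h _ => key h) ⟨h₀, Finset.mem_univ _, hstrict⟩
    rw [hsum0] at hlt
    linarith
  · intro heq
    subst heq
    simp only [div_self (hp _).ne', Real.log_one, mul_zero, Finset.sum_const_zero]

/-- Proposition 1: the value of the adversarial objective at the optimal discriminator is
at least `-log 4`, with equality if and only if `p₁ = p₀`. -/
theorem adversarial_global_minimum {H : Type*} [Fintype H] (p₁ p₀ : H → ℝ)
    (hp₁ : ∀ h, 0 < p₁ h) (hp₀ : ∀ h, 0 < p₀ h)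
    (hs₁ : ∑ h, p₁ h = 1) (hs₀ : ∑ h, p₀ h = 1) :
    -Real.log 4
      ≤ ∑ h, (p₁ h * Real.log (p₁ h / (p₁ h + p₀ h))
            + p₀ h * Real.log (p₀ h / (p₁ h + p₀ h))) ∧
    (∑ h, (p₁ h * Real.log (p₁ h / (p₁ h + p₀ h))
         + p₀ h * Real.log (p₀ h / (p₁ h + p₀ h))) = -Real.log 4 ↔ p₁ = p₀) := by
  set m : H → ℝ := fun h => (p₁ h + p₀ h) / 2 with hm_def
  have hm : ∀ h, 0 < m h := fun h => by
    have := hp₁ h; have := hp₀ h; simp only [hm_def]; positivity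
  have hms : ∑ h, m h = 1 := by
    simp only [hm_def]
    rw [← Finset.sum_div, Finset.sum_add_distrib, hs₁, hs₀]
    norm_num
  obtain ⟨hA, hAeq⟩ := gibbs_aux p₁ m hp₁ hm (by rw [hms, hs₁])
  obtain ⟨hB, hBeq⟩ := gibbs_aux p₀ m hp₀ hm (by rw [hms, hs₀])
  set A := ∑ h, p₁ h * Real.log (m h / p₁ h) with hA_def
  set B := ∑ h, p₀ h * Real.log (m h / p₀ h) with hB_def
  have hlog4 : Real.log 4 = 2 * Real.log 2 := by
    rw [show (4:ℝ) = 2 * 2 by norm_num, Real.log_mul two_ne_zero two_ne_zero]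
    ring
  have e : ∀ h, p₁ h * Real.log (p₁ h / (p₁ h + p₀ h))
      + p₀ h * Real.log (p₀ h / (p₁ h + p₀ h))
      = -(p₁ h * Real.log (m h / p₁ h)) - p₀ h * Real.log (m h / p₀ h)
        - (p₁ h + p₀ h) * Real.log 2 := by
    intro h
    have h1 := hp₁ h
    have h0 := hp₀ h
    have hsum : (0:ℝ) < p₁ h + p₀ h := by linarith
    have lm1 : Real.log (m h / p₁ h)
        = Real.log (p₁ h + p₀ h) - Real.log 2 - Real.log (p₁ h) := by
      simp only [hm_def]
      rw [Real.log_div (by positivity) h1.ne', Real.log_div hsum.ne' two_ne_zero]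
    have lm0 : Real.log (m h / p₀ h)
        = Real.log (p₁ h + p₀ h) - Real.log 2 - Real.log (p₀ h) := by
      simp only [hm_def]
      rw [Real.log_div (by positivity) h0.ne', Real.log_div hsum.ne' two_ne_zero]
    rw [Real.log_div h1.ne' hsum.ne', Real.log_div h0.ne' hsum.ne', lm1, lm0]
    ring
  have esum : ∑ h, (p₁ h * Real.log (p₁ h / (p₁ h + p₀ h))
      + p₀ h * Real.log (p₀ h / (p₁ h + p₀ h)))
      = -A - B - 2 * Real.log 2 := by
    rw [Finset.sum_congr rfl (fun h _ => e h)]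
    rw [show ∀ (f g k : H → ℝ), ∑ h, (-(f h) - g h - k h)
        = -(∑ h, f h) - (∑ h, g h) - (∑ h, k h) from fun f g k => by
      simp [Finset.sum_sub_distrib, Finset.sum_add_distrib]]
    have : ∑ h, (p₁ h + p₀ h) * Real.log 2 = 2 * Real.log 2 := by
      rw [← Finset.sum_mul, Finset.sum_add_distrib, hs₁, hs₀]; ring
    rw [this, hA_def, hB_def]
  have hm_eq : (p₁ = m) ↔ p₁ = p₀ := by
    constructor
    · intro h
      funext x
      have := congrFun h x
      simp only [hm_def] at this
      linarith
    · intro h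
      funext x
      have := congrFun h x
      simp only [hm_def]
      linarith
  constructor
  · rw [esum, hlog4]; linarith
  · rw [esum, hlog4]
    constructor
    · intro heq
      have hAB : A + B = 0 := by linarith
      have hA0 : A = 0 := by linarith
      exact hm_eq.mp (hAeq.mp hA0)
    · intro heq
      have h1 : p₁ = m := hm_eq.mpr heq
      have h0 : p₀ = m := by
        rw [← heq] at *; exact h1
      have hA0 : A = 0 := hAeq.mpr h1
      have hB0 : B = 0 := hBeq.mpr h0
      rw [hA0, hB0]; ring
end

section
/- Let X be a finite type and let P : X × Bool × Bool → ℝ be a joint probability mass function for (h, s, ŝ): P(h,s,t) ≥ 0 for all h, s, t and Σ_{h,s,t} P(h,s,t) = 1. Write P_S(s) = Σ_{h,t} P(h,s,t), P_Ŝ(t) = Σ_{h,s} P(h,s,t), P_{H,S}(h,s) = Σ_t P(h,s,t), P_{S,Ŝ}(s,t) = Σ_h P(h,s,t), and P_{H,Ŝ}(h,t) = Σ_s P(h,s,t). Assume: (i) P_S(1) > 0, P_S(0) > 0, P_Ŝ(1) > 0, P_Ŝ(0) > 0; (ii) for all h ∈ X, s ∈ Bool, t ∈ Bool: P(h,s,t)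 · P_S(s) = P_{H,S}(h,s) · P_{S,Ŝ}(s,t) (conditional independence of h and ŝ given s); (iii) P_{S,Ŝ}(1,1) · P_Ŝ(0) ≠ P_{S,Ŝ}(1,0) · P_Ŝ(1) (i.e., p(s=1|ŝ=1) ≠ p(s=1|ŝ=0)); (iv) for all h ∈ X: P_{H,Ŝ}(h,1) · P_Ŝ(0) = P_{H,Ŝ}(h,0) · P_Ŝ(1) (i.e., p(h|ŝ=1) = p(h|ŝ=0)). Then for all h ∈ X: P_{H,S}(h,1) · P_S(0) = P_{H,S}(h,0) · P_S(1) (i.e., p(h|s=1) = p(h|s=0)). -/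
/-- Fully discrete Theorem 1. `P h s t` is the joint pmf of `(h, s, ŝ)` with `true ↔ 1` and
`false ↔ 0`. Hypothesis `hci` encodes `p(ŝ,h|s) = p(ŝ|s)p(h|s)` (cross-multiplied), `hne`
encodes `p(s=1|ŝ=1) ≠ p(s=1|ŝ=0)`, `hpar` encodes `p(h|ŝ=1) = p(h|ŝ=0)`; the conclusion
encodes `p(h|s=1) = p(h|s=0)`. -/
theorem discrete_fair_representation {X : Type*} [Fintype X]
    (P : X → Bool → Bool → ℝ)
    (hpos : ∀ h s t, 0 ≤ P h s t)
    (hsum : ∑ h, ∑ s, ∑ t, P h s t = 1)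
    (hS1 : 0 < ∑ h, ∑ t, P h true t) (hS0 : 0 < ∑ h, ∑ t, P h false t)
    (hShat1 : 0 < ∑ h, ∑ s, P h s true) (hShat0 : 0 < ∑ h, ∑ s, P h s false)
    (hci : ∀ h s t, P h s t * (∑ h', ∑ t', P h' s t')
        = (∑ t', P h s t') * (∑ h', P h' s t))
    (hne : (∑ h, P h true true) * (∑ h, ∑ s, P h s false)
         ≠ (∑ h, P h true false) * (∑ h, ∑ s, P h s true))
    (hpar : ∀ h, (∑ s, P h s true) * (∑ h', ∑ s, P h' s false)
        = (∑ s, P h s false) * (∑ h', ∑ s, P h' s true)) :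
    ∀ h, (∑ t, P h true t) * (∑ h', ∑ t, P h' false t)
        = (∑ t, P h false t) * (∑ h', ∑ t, P h' true t) := by
  intro h
  -- marginal over X of each (s,t) cell
  set q11 : ℝ := ∑ h', P h' true true with hq11
  set q10 : ℝ := ∑ h', P h' true false with hq10
  set q01 : ℝ := ∑ h', P h' false true with hq01
  set q00 : ℝ := ∑ h', P h' false false with hq00
  -- pointwise conditional independence relations
  have ktt : P h true true * (q11 + q10) = (P h true true + P h true false) * q11 := by
    have := hci h true true
    simpa [Fintype.sum_bool, Finset.sum_add_distrib, hq11, hq10] using this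
  have ktf : P h true false * (q11 + q10) = (P h true true + P h true false) * q10 := by
    have := hci h true false
    simpa [Fintype.sum_bool, Finset.sum_add_distrib, hq11, hq10] using this
  have kft : P h false true * (q01 + q00) = (P h false true + P h false false) * q01 := by
    have := hci h false true
    simpa [Fintype.sum_bool, Finset.sum_add_distrib, hq01, hq00] using this
  have kff : P h false false * (q01 + q00) = (P h false true + P h false false) * q00 := by
    have := hci h false false
    simpa [Fintype.sum_bool, Finset.sum_add_distrib, hq01, hq00] using this
  have hpar' : (P h true true + P h false true) * (q10 + q00)
      = (P h true false + P h false false) * (q11 + q01) := by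
    have := hpar h
    simpa [Fintype.sum_bool, Finset.sum_add_distrib, hq11, hq10, hq01, hq00] using this
  have hne' : q11 * (q10 + q00) ≠ q10 * (q11 + q01) := by
    have := hne
    simpa [Fintype.sum_bool, Finset.sum_add_distrib, hq11, hq10, hq01, hq00] using this
  have hD : q11 * q00 - q10 * q01 ≠ 0 := by
    intro hd
    exact hne' (by ring_nf; nlinarith [hd])
  have main : (q11 * q00 - q10 * q01) *
      ((P h true true + P h true false) * (q01 + q00)
        - (P h false true + P h false false) * (q11 + q10)) = 0 := by
    linear_combination (q11 + q10) * (q01 + q00) * hpar'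
      - (q01 + q00) * (q10 + q00) * ktt
      - (q11 + q10) * (q10 + q00) * kft
      + (q01 + q00) * (q11 + q01) * ktf
      + (q11 + q10) * (q11 + q01) * kff
  have := mul_eq_zero.mp main
  rcases this with hD0 | hgoal
  · exact absurd hD0 hD
  · have : (∑ t, P h true t) * (∑ h', ∑ t, P h' false t)
        = (∑ t, P h false t) * (∑ h', ∑ t, P h' true t) := by
      simp only [Fintype.sum_bool, Finset.sum_add_distrib, ← hq11, ← hq10, ← hq01, ← hq00]
      linarith
    exact this
end

section
/- Let Y be a finite type, let v : Y → ℝ be any function, and let P : Y × Bool × Bool → ℝ be a joint probability mass function for (ŷ, s, ŝ): P(y,s,t) ≥ 0 for all y, s, t and Σ_{y,s,t} P(y,s,t) = 1. Write P_S(s) = Σ_{y,t} P(y,s,t), P_Ŝ(t) = Σ_{y,s} P(y,s,t), P_Y(y) = Σ_{s,t} P(y,s,t), P_{Y,S}(y,s) = Σ_t P(y,s,t), P_{S,Ŝ}(s,t) = Σ_y P(y,s,t), and P_{Y,Ŝ}(y,t) = Σ_s P(y,s,t). Assume: (i) P_S(1) > 0 and P_S(0) > 0; (ii) for all y ∈ Y,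 s ∈ Bool, t ∈ Bool: P(y,s,t) · P_S(s) = P_{Y,S}(y,s) · P_{S,Ŝ}(s,t) (conditional independence of ŷ and ŝ given s); (iii) for all y ∈ Y and s ∈ Bool: P_{Y,S}(y,s) = P_Y(y) · P_S(s) (ŷ is independent of s). Then: (a) for all y ∈ Y and t ∈ Bool, P_{Y,Ŝ}(y,t) = P_Y(y) · P_Ŝ(t), and (b) Σ_{y,t} (if t = 1 then 1 else 0) · v(y) · P_{Y,Ŝ}(y,t) − (Σ_{t} (if t = 1 then 1 else 0) · P_Ŝ(t)) · (Σ_y v(y) · P_Y(y)) = 0, i.e., Cov(ŝ, v(ŷ)) = 0. -/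
/-- Fully discrete Theorem 2. `P y s t` is the joint pmf of `(ŷ, s, ŝ)` with `true ↔ 1` and
`false ↔ 0`, and `v` is the real-valued encoding of the predictions. Hypothesis `hci` encodes
`p(ŝ,ŷ|s) = p(ŝ|s)p(ŷ|s)` (cross-multiplied), `hpar` is statistical parity `ŷ ⊥ s`. The
conclusion says (a) `ŷ` is independent of `ŝ`, and (b) `Cov(ŝ, v(ŷ)) = 0`. -/
theorem discrete_covariance_zero {Y : Type*} [Fintype Y] (v : Y → ℝ)
    (P : Y → Bool → Bool → ℝ)
    (hpos : ∀ y s t, 0 ≤ P y s t)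
    (hsum : ∑ y, ∑ s, ∑ t, P y s t = 1)
    (hS1 : 0 < ∑ y, ∑ t, P y true t) (hS0 : 0 < ∑ y, ∑ t, P y false t)
    (hci : ∀ y s t, P y s t * (∑ y', ∑ t', P y' s t')
        = (∑ t', P y s t') * (∑ y', P y' s t))
    (hpar : ∀ y s, (∑ t, P y s t)
        = (∑ s', ∑ t, P y s' t) * (∑ y', ∑ t, P y' s t)) :
    (∀ y t, (∑ s, P y s t) = (∑ s, ∑ t', P y s t') * (∑ y', ∑ s, P y' s t)) ∧
    (∑ y, ∑ t, (if t = true then (1 : ℝ) else 0) * v y * (∑ s, P y s t))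
      - (∑ t, (if t = true then (1 : ℝ) else 0) * (∑ y, ∑ s, P y s t))
          * (∑ y, v y * (∑ s, ∑ t, P y s t)) = 0 := by
  have key : ∀ y s t, P y s t
      = (∑ s', ∑ t', P y s' t') * (∑ y', P y' s t) := by
    intro y s t
    have h := hci y s t
    rw [hpar y s] at h
    have hA : 0 < ∑ y', ∑ t', P y' s t' := by
      cases s
      · exact hS0
      · exact hS1
    have h' : P y s t * (∑ y', ∑ t', P y' s t')
        = ((∑ s', ∑ t', P y s' t') * (∑ y', P y' s t))
            * (∑ y', ∑ t', P y' s t') := by rw [h]; ring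
    exact mul_right_cancel₀ hA.ne' h'
  have ha : ∀ y t, (∑ s, P y s t)
      = (∑ s, ∑ t', P y s t') * (∑ y', ∑ s, P y' s t) := by
    intro y t
    calc ∑ s, P y s t
        = ∑ s, (∑ s', ∑ t', P y s' t') * (∑ y', P y' s t) := by
          exact Finset.sum_congr rfl fun s _ => key y s t
      _ = (∑ s', ∑ t', P y s' t') * (∑ s, ∑ y', P y' s t) := by
          rw [Finset.mul_sum]
      _ = (∑ s, ∑ t', P y s t') * (∑ y', ∑ s, P y' s t) := by
          congr 1
          exact Finset.sum_comm
  refine ⟨ha, ?_⟩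
  have hrw : (∑ y, ∑ t, (if t = true then (1 : ℝ) else 0) * v y * (∑ s, P y s t))
      = ∑ y, ∑ t, (if t = true then (1 : ℝ) else 0) * v y
          * ((∑ s, ∑ t', P y s t') * (∑ y', ∑ s, P y' s t)) := by
    refine Finset.sum_congr rfl fun y _ => Finset.sum_congr rfl fun t _ => ?_
    rw [ha y t]
  rw [hrw, sub_eq_zero, Finset.sum_mul_sum, Finset.sum_comm]
  refine Finset.sum_congr rfl fun t _ => Finset.sum_congr rfl fun y _ => ?_
  ring
end
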